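/- arXiv:1712.07260 — 5 statements merged into one kernel-verified Lean document; each statement's English description precedes it below -/
import Mathlib

section
/- The Gauss sum identity Σ_{a=0}^{2p-1} e^{-iπ a²/(2p)} = (1 - i)√p holds for every positive integer p. -/
/-!
Put `τ = -1/(2p) + i t` with `t > 0`. Splitting the series `θ(τ) = ∑ₙ exp(π i n² τ)` according to
`n mod 2p` writes `θ(τ)` as `∑ₐ exp(-π i a²/(2p))` times Hurwitz kernels, which by Poisson summation
behave like `1/(2p√t)` as `t → 0⁺`. On the other hand, `τ ↦ τ/(1 + 2pτ)` is an inversion, a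
translation by `2p` and another inversion, so it preserves `θ` up to the automorphy factor
`(1 + i)√(pt)`, and it sends `τ` to `1/(2p) + i/(4p²t)`, whose imaginary part tends to infinity,
where `θ → 1`. Comparing the two descriptions of `θ(τ)` as `t → 0⁺` evaluates the Gauss sum.
-/

open Complex Finset Filter Topology HurwitzZeta

namespace Complex

lemma mul_cpow_of_re_pos {x y : ℂ} (hx : 0 < x.re) (hy : 0 < y.re) (c : ℂ) :
    (x * y) ^ c = x ^ c * y ^ c := by
  have hx₀ : x ≠ 0 := fun h ↦ by simp [h] at hx
  have hy₀ : y ≠ 0 := fun h ↦ by simp [h] at hy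
  have hx_arg := abs_lt.mp (abs_arg_lt_pi_div_two_iff.mpr (.inl hx))
  have hy_arg := abs_lt.mp (abs_arg_lt_pi_div_two_iff.mpr (.inl hy))
  have hlog : log (x * y) = log x + log y := log_mul hx₀ hy₀ ⟨by linarith, by linarith⟩
  rw [cpow_def_of_ne_zero (mul_ne_zero hx₀ hy₀), cpow_def_of_ne_zero hx₀,
    cpow_def_of_ne_zero hy₀, hlog, add_mul, exp_add]

end Complex

lemma HasSum.sum_range_eq_of_hasSum_residues {α : Type*} [AddCommMonoid α] [TopologicalSpace α]
    [ContinuousAdd α] [T3Space α] {N : ℕ} [NeZero N] {f : ℤ → α} {s : α} (hf : HasSum f s)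
    {g : ℕ → α} (hg : ∀ a < N, HasSum (fun m : ℤ ↦ f (m * N + a)) (g a)) :
    ∑ a ∈ range N, g a = s := by
  let e : ℤ ≃ Fin N × ℤ := (Int.divModEquiv N).trans (Equiv.prodComm _ _)
  have hsum : HasSum (fun a : Fin N ↦ g a) s :=
    (e.symm.hasSum_iff.mpr hf).prod_fiberwise fun a ↦ by simpa [e] using hg a a.isLt
  rw [← Fin.sum_univ_eq_sum_range, hsum.unique (hasSum_fintype _)]

lemma hasSum_jacobiTheta {τ : ℂ} (hτ : 0 < τ.im) :
    HasSum (fun n : ℤ ↦ cexp (Real.pi * I * n ^ 2 * τ)) (jacobiTheta τ) := by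
  simpa [jacobiTheta_eq_jacobiTheta₂, jacobiTheta₂_term] using hasSum_jacobiTheta₂_term 0 hτ

lemma jacobiTheta_neg_one_div {τ : ℂ} (hτ : 0 < τ.im) :
    jacobiTheta (-1 / τ) = (-I * τ) ^ (1 / 2 : ℂ) * jacobiTheta τ := by
  have h := jacobiTheta_S_smul ⟨τ, hτ⟩
  rw [UpperHalfPlane.modular_S_smul] at h
  simpa [neg_div, inv_neg] using h

lemma jacobiTheta_add_two_mul_natCast (τ : ℂ) (n : ℕ) :
    jacobiTheta (τ + 2 * n) = jacobiTheta τ := by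
  have h : Function.Periodic jacobiTheta 2 := fun τ ↦ by rw [add_comm, jacobiTheta_two_add]
  simpa [mul_comm] using h.nat_mul n τ

lemma tendsto_jacobiTheta_comap_im_atTop : Tendsto jacobiTheta (comap im atTop) (𝓝 1) := by
  have hexp : Tendsto (fun τ : ℂ ↦ Real.exp (-Real.pi * τ.im)) (comap im atTop) (𝓝 0) :=
    (Real.tendsto_exp_atBot.comp
      (tendsto_id.const_mul_atTop_of_neg (neg_lt_zero.mpr Real.pi_pos))).comp tendsto_comap
  simpa using (isBigO_at_im_infty_jacobiTheta_sub_one.trans_tendsto hexp).add_const 1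

lemma tendsto_cosKernel_atTop (a : UnitAddCircle) : Tendsto (cosKernel a) atTop (𝓝 1) := by
  obtain ⟨r, hr, hO⟩ := isBigO_atTop_cosKernel_sub a
  have hexp : Tendsto (fun x : ℝ ↦ Real.exp (-r * x)) atTop (𝓝 0) :=
    Real.tendsto_exp_atBot.comp (tendsto_id.const_mul_atTop_of_neg (neg_lt_zero.mpr hr))
  simpa using (hO.trans_tendsto hexp).add_const 1

lemma cexp_pi_I_mul_sq_mul_neg_inv_two_mul_add_I_mul (q : ℕ) (hq : q ≠ 0) (t : ℝ) (m a : ℤ) :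
    cexp (Real.pi * I * ((m * (2 * q) + a : ℤ) : ℂ) ^ 2 * (-1 / (2 * q) + I * t)) =
      cexp (-(Real.pi * I * (a : ℂ) ^ 2) / (2 * q)) *
        Real.exp (-Real.pi * (m + a / (2 * q)) ^ 2 * (t * (2 * q) ^ 2)) := by
  have hq' : (q : ℂ) ≠ 0 := Nat.cast_ne_zero.mpr hq
  rw [ofReal_exp, ← Complex.exp_add, Complex.exp_eq_exp_iff_exists_int]
  refine ⟨-(m ^ 2 * q + m * a), ?_⟩
  push_cast
  field_simp
  ring_nf
  rw [I_sq]
  ring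

lemma jacobiTheta_neg_inv_two_mul_add_I_mul (q : ℕ) (hq : q ≠ 0) {t : ℝ} (ht : 0 < t) :
    jacobiTheta (-1 / (2 * q) + I * t) = ∑ a ∈ range (2 * q),
      cexp (-(Real.pi * I * (a : ℂ) ^ 2) / (2 * q)) *
        evenKernel ((a / (2 * q) : ℝ) : UnitAddCircle) (t * (2 * q) ^ 2) := by
  have : NeZero (2 * q) := ⟨by omega⟩
  have hτ : 0 < (-1 / (2 * q) + I * t : ℂ).im := by simp [Complex.div_im, ht]
  refine (HasSum.sum_range_eq_of_hasSum_residues (hasSum_jacobiTheta hτ) fun a _ ↦ ?_).symm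
  have h := (hasSum_ofReal.mpr (hasSum_int_evenKernel (a / (2 * q))
    (by positivity : 0 < t * (2 * q) ^ 2))).mul_left (cexp (-(Real.pi * I * (a : ℂ) ^ 2) / (2 * q)))
  exact h.congr_fun fun m ↦ by
    simpa using cexp_pi_I_mul_sq_mul_neg_inv_two_mul_add_I_mul q hq t m a

lemma jacobiTheta_inv_two_mul_add_I_div (q : ℕ) (hq : q ≠ 0) {t : ℝ} (ht : 0 < t) :
    jacobiTheta (1 / (2 * q) + I / ((2 * q) ^ 2 * t)) =
      (1 + I) * Real.sqrt (q * t) * jacobiTheta (-1 / (2 * q) + I * t) := by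
  have hq' : (q : ℂ) ≠ 0 := Nat.cast_ne_zero.mpr hq
  have ht' : (t : ℂ) ≠ 0 := ofReal_ne_zero.mpr ht.ne'
  set τ : ℂ := -1 / (2 * q) + I * t with hτ_def
  clear_value τ
  have hτ : 0 < τ.im := by simp [hτ_def, Complex.div_im, ht]
  have hτ₀ : τ ≠ 0 := fun h ↦ by simp [h] at hτ
  set σ : ℂ := -1 / τ - 2 * q with hσ_def
  clear_value σ
  have hστ : σ * τ = -(2 * q * I * t) := by
    rw [hσ_def, sub_mul, div_mul_cancel₀ _ hτ₀, hτ_def]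
    field_simp
    ring
  have hσ : 0 < σ.im := by
    have : σ.im = τ.im / normSq τ := by simp [hσ_def, div_eq_mul_inv, Complex.inv_im]
    rw [this]
    exact div_pos hτ (normSq_pos.mpr hτ₀)
  have hσ₀ : σ ≠ 0 := fun h ↦ by simp [h] at hσ
  have hρ : 1 / (2 * q) + I / ((2 * q) ^ 2 * t) = -1 / σ := by
    rw [eq_div_iff hσ₀]
    apply mul_right_cancel₀ hτ₀
    rw [mul_assoc, hστ, hτ_def]
    field_simp
    ring_nf
    rw [I_sq]
    ring
  have hsq : (-I * σ) * (-I * τ) = ((1 + I) * Real.sqrt (q * t)) ^ 2 := by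
    rw [mul_pow, ← ofReal_pow, Real.sq_sqrt (by positivity)]
    push_cast
    linear_combination I ^ 2 * hστ - (q * t + 2 * I * q * t) * I_sq
  calc jacobiTheta (1 / (2 * q) + I / ((2 * q) ^ 2 * t))
      = (-I * σ) ^ (1 / 2 : ℂ) * jacobiTheta (-1 / τ) := by
        rw [hρ, jacobiTheta_neg_one_div hσ, show -1 / τ = σ + 2 * q by rw [hσ_def]; ring,
          jacobiTheta_add_two_mul_natCast]
    _ = ((-I * σ) * (-I * τ)) ^ (1 / 2 : ℂ) * jacobiTheta τ := by
        rw [jacobiTheta_neg_one_div hτ, ← mul_assoc,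
          ← mul_cpow_of_re_pos (by simpa [mul_re] using hσ) (by simpa [mul_re] using hτ)]
    _ = (1 + I) * Real.sqrt (q * t) * jacobiTheta τ := by
        rw [hsq, one_div, sq_cpow_two_inv (by simp [Real.sqrt_pos.mpr, ht, Nat.pos_of_ne_zero hq])]

lemma sum_cexp_mul_cosKernel_eq_jacobiTheta (q : ℕ) (hq : q ≠ 0) {s : ℝ} (hs : 0 < s) :
    ∑ a ∈ range (2 * q), cexp (-(Real.pi * I * (a : ℂ) ^ 2) / (2 * q)) *
        cosKernel ((a / (2 * q) : ℝ) : UnitAddCircle) s =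
      (1 - I) * Real.sqrt q * jacobiTheta (1 / (2 * q) + I * s) := by
  set t : ℝ := 1 / ((2 * q) ^ 2 * s) with ht_def
  have ht : 0 < t := by positivity
  have hq₀ : (0 : ℝ) < q := by positivity
  have hts : t * (2 * q) ^ 2 = 1 / s := by rw [ht_def]; field_simp
  have hcusp := jacobiTheta_neg_inv_two_mul_add_I_mul q hq ht
  simp_rw [hts, evenKernel_functional_equation, one_div_one_div] at hcusp
  have hmod := jacobiTheta_inv_two_mul_add_I_div q hq ht
  rw [show I / ((2 * q) ^ 2 * t) = I * s by rw [ht_def]; push_cast; field_simp, hcusp] at hmod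
  set c : ℝ := 1 / (1 / s) ^ (1 / 2 : ℝ) with hc
  have hsqrt : Real.sqrt q * Real.sqrt (q * t) * c = 1 / 2 := by
    rw [hc, ← Real.sqrt_eq_rpow, one_div s, Real.sqrt_inv, div_inv_eq_mul, one_mul,
      ← Real.sqrt_mul hq₀.le, ← Real.sqrt_mul (by positivity),
      show q * (q * t) * s = (1 / 2) ^ 2 by rw [ht_def]; field_simp, Real.sqrt_sq (by norm_num)]
  have hsqrtC : (Real.sqrt q : ℂ) * Real.sqrt (q * t) * c = 1 / 2 := by
    simpa using congrArg ofReal hsqrt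
  rw [hmod, mul_sum, mul_sum]
  refine sum_congr rfl fun a _ ↦ ?_
  set e := cexp (-(Real.pi * I * (a : ℂ) ^ 2) / (2 * q))
  set K := cosKernel ((a / (2 * q) : ℝ) : UnitAddCircle) s
  rw [ofReal_mul]
  linear_combination (-(1 - I) * (1 + I) * e * K) * hsqrtC + (e * K / 2) * I_sq

/-- The Gauss sum identity `Σ_{a=0}^{2p-1} e^{-iπ a²/(2p)} = (1 - i)√p`. -/
theorem gauss_sum (p : ℕ) (hp : 0 < p) :
    ∑ a ∈ Finset.range (2 * p),
        Complex.exp (-(Real.pi * Complex.I * (a : ℂ) ^ 2) / (2 * p))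
      = (1 - Complex.I) * Real.sqrt p := by
  have hsum : Tendsto (fun s : ℝ ↦ ∑ a ∈ range (2 * p),
      cexp (-(Real.pi * I * (a : ℂ) ^ 2) / (2 * p)) *
        cosKernel ((a / (2 * p) : ℝ) : UnitAddCircle) s) atTop
      (𝓝 (∑ a ∈ range (2 * p), cexp (-(Real.pi * I * (a : ℂ) ^ 2) / (2 * p)))) := by
    refine tendsto_finsetSum _ fun a _ ↦ ?_
    simpa using ((tendsto_cosKernel_atTop _).ofReal).const_mul _
  have htheta : Tendsto (fun s : ℝ ↦ (1 - I) * Real.sqrt p * jacobiTheta (1 / (2 * p) + I * s))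
      atTop (𝓝 ((1 - I) * Real.sqrt p)) := by
    have hcurve : Tendsto (fun s : ℝ ↦ 1 / (2 * p) + I * s) atTop (comap im atTop) :=
      tendsto_comap_iff.mpr <| tendsto_id.congr fun s ↦ by simp
    simpa using (tendsto_jacobiTheta_comap_im_atTop.comp hcurve).const_mul ((1 - I) * Real.sqrt p)
  refine tendsto_nhds_unique (hsum.congr' ?_) htheta
  filter_upwards [eventually_gt_atTop 0] with s hs
  exact sum_cexp_mul_cosKernel_eq_jacobiTheta p hp.ne' hs
end

section
/- Let κ: ℂ → ℂ^× be a continuous quadratic form, i.e. κ(z) = κ(-z) for all z and the map ρ(z,w) = κ(z+w)κ(z)^{-1}κ(w)^{-1} is a group homomorphism (ℂ,+) → (ℂ^×,·) in each variable. Then there exist ζ, χ, ξ ∈ ℂ such that κ(z) = exp(ζ z² + χ z z̄ + ξ z̄²) for all z ∈ ℂ. -/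
/-!
Since `ℂ` is simply connected, `κ = exp ∘ q` for a continuous `q` with `q 0 = 0`. Evenness of `κ`
and bilinearity of `ρ = exp ∘ polar q` only say that certain continuous expressions in `q` take
values in `2πiℤ`; being continuous on a connected space and zero at the origin, they vanish.
So `q` is even with biadditive polar form, continuity makes that form `ℝ`-bilinear, and
`q z = polar q z z / 2` is a real quadratic form in `z = x + iy`, i.e. a combination of `z²`,
`z z̄` and `z̄²`.
-/

open Complex

/-- The form `ρ(z,w) = κ(z+w)κ(z)⁻¹κ(w)⁻¹` associated to `κ`. -/
noncomputable def assocForm (κ : ℂ → ℂ) (z w : ℂ) : ℂ := κ (z + w) * (κ z)⁻¹ * (κ w)⁻¹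

open ComplexConjugate QuadraticMap

theorem Complex.exists_continuous_exp_eq {A : Type*} [TopologicalSpace A]
    [SimplyConnectedSpace A] [LocallyPathConnectedSpace A] {f : A → ℂ} (hf : Continuous f)
    (hne : ∀ a, f a ≠ 0) {a₀ : A} {e₀ : ℂ} (he : exp e₀ = f a₀) :
    ∃ g : A → ℂ, Continuous g ∧ g a₀ = e₀ ∧ ∀ a, exp (g a) = f a := by
  obtain ⟨g, ⟨hg₀, hg⟩, -⟩ := isCoveringMapOn_exp.existsUnique_continuousMap_lifts ⟨f, hf⟩ he hne
  exact ⟨g, g.continuous, hg₀, congrFun hg⟩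

theorem Complex.eq_of_exp_eq_one {X : Type*} [TopologicalSpace X] [PreconnectedSpace X]
    {f : X → ℂ} (hf : Continuous f) (h : ∀ x, exp (f x) = 1) (x y : X) : f x = f y := by
  have hmem : ∀ x, f x ∈ AddSubgroup.zmultiples (2 * Real.pi * I) := fun x => by
    obtain ⟨n, hn⟩ := exp_eq_one_iff.mp (h x)
    exact AddSubgroup.mem_zmultiples_iff.mpr ⟨n, by rw [hn, zsmul_eq_mul]⟩
  have := NormedSpace.discreteTopology_zmultiples (2 * Real.pi * I)
  exact congrArg Subtype.val
    (PreconnectedSpace.constant inferInstance (hf.subtype_mk hmem) (x := x) (y := y))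

theorem exists_diag_eq_of_add_left_of_symm {β : ℂ → ℂ → ℂ}
    (hadd : ∀ z z' w, β (z + z') w = β z w + β z' w) (hcont : ∀ w, Continuous (β · w))
    (hsymm : ∀ z w, β z w = β w z) :
    ∃ ζ χ ξ : ℂ, ∀ z, β z z = ζ * z ^ 2 + χ * (z * conj z) + ξ * conj z ^ 2 := by
  have hsmul : ∀ (t : ℝ) z w, β (t * z) w = t * β z w := fun t z w => by
    simpa only [real_smul, AddMonoidHom.mk'_apply] using
      map_real_smul (AddMonoidHom.mk' (β · w) (hadd · · w)) (hcont w) t z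
  have hadd' : ∀ z w w', β z (w + w') = β z w + β z w' := fun z w w' => by
    simp only [hsymm z, hadd]
  have hsmul' : ∀ (t : ℝ) z w, β z (t * w) = t * β z w := fun t z w => by
    rw [hsymm, hsmul, hsymm]
  -- `β z z = x² β 1 1 + 2xy β 1 I + y² β I I`, rewritten with `x = (z + z̄)/2`, `y = (z - z̄)/(2i)`.
  refine ⟨(β 1 1 - β I I) / 4 - I * β 1 I / 2, (β 1 1 + β I I) / 2,
    (β 1 1 - β I I) / 4 + I * β 1 I / 2, fun z => ?_⟩
  obtain ⟨x, y, rfl⟩ : ∃ x y : ℝ, z = x * 1 + y * I := ⟨z.re, z.im, by simp [re_add_im]⟩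
  simp only [hadd, hadd', hsmul, hsmul', hsymm I 1, map_add, map_mul, conj_ofReal, conj_I,
    map_one]
  linear_combination (2 * x * y * β 1 I + y ^ 2 * β I I) * I_sq

theorem exists_eq_of_polar_add_left {f : ℂ → ℂ} (heven : ∀ z, f (-z) = f z)
    (hadd : ∀ z z' w, polar f (z + z') w = polar f z w + polar f z' w)
    (hcont : Continuous f) :
    ∃ ζ χ ξ : ℂ, ∀ z, f z = ζ * z ^ 2 + χ * (z * conj z) + ξ * conj z ^ 2 := by
  have hpolar_zero : ∀ w, polar f 0 w = 0 := fun w => by simpa using hadd 0 0 w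
  have hf_zero : f 0 = 0 := by simpa [polar] using hpolar_zero 0
  have hpolar_self : ∀ z, polar f z z = 2 * f z := fun z => by
    have h := hadd z (-z) z
    rw [add_neg_cancel, hpolar_zero] at h
    simp only [polar, neg_add_cancel, hf_zero, heven] at h ⊢
    linear_combination -h
  obtain ⟨ζ, χ, ξ, h⟩ := exists_diag_eq_of_add_left_of_symm hadd
    (fun w => by unfold polar; fun_prop) (polar_comm f)
  refine ⟨ζ / 2, χ / 2, ξ / 2, fun z => ?_⟩
  linear_combination (h z - hpolar_self z) / 2

theorem apply_zero_eq_one_of_assocForm_add_left {κ : ℂ → ℂ} (hne : κ 0 ≠ 0)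
    (hbil : assocForm κ (0 + 0) 0 = assocForm κ 0 0 * assocForm κ 0 0) : κ 0 = 1 := by
  simp only [assocForm, add_zero, mul_inv_cancel₀ hne, one_mul] at hbil
  exact inv_eq_one.mp (mul_left_cancel₀ (inv_ne_zero hne) (hbil.symm.trans (mul_one _).symm))

section ExpLift

variable {κ q : ℂ → ℂ}

theorem exp_polar_eq_assocForm (hκq : ∀ z, exp (q z) = κ z) (z w : ℂ) :
    exp (polar q z w) = assocForm κ z w := by
  simp only [polar, exp_sub, hκq, assocForm, div_eq_mul_inv]

theorem polar_add_left_of_exp_eq (hκq : ∀ z, exp (q z) = κ z) (hq : Continuous q)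
    (hq₀ : q 0 = 0)
    (hbil : ∀ z z' w, assocForm κ (z + z') w = assocForm κ z w * assocForm κ z' w)
    (z z' w : ℂ) : polar q (z + z') w = polar q z w + polar q z' w := by
  set D : ℂ × ℂ × ℂ → ℂ := fun p =>
    polar q (p.1 + p.2.1) p.2.2 - (polar q p.1 p.2.2 + polar q p.2.1 p.2.2) with hD
  have hD_cont : Continuous D := by simp only [hD, polar]; fun_prop
  have hD_exp : ∀ p, exp (D p) = 1 := fun p => by
    simp only [hD, exp_sub, exp_add, exp_polar_eq_assocForm hκq, hbil]
    rw [← exp_polar_eq_assocForm hκq, ← exp_polar_eq_assocForm hκq, ← exp_add]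
    exact div_self (exp_ne_zero _)
  have hD_zero : D (0, 0, 0) = 0 := by simp [hD, polar, hq₀]
  exact sub_eq_zero.mp ((eq_of_exp_eq_one hD_cont hD_exp (z, z', w) (0, 0, 0)).trans hD_zero)

theorem apply_neg_of_exp_eq (hκq : ∀ z, exp (q z) = κ z) (hq : Continuous q) (hq₀ : q 0 = 0)
    (heven : ∀ z, κ (-z) = κ z) (z : ℂ) : q (-z) = q z := by
  have hexp : ∀ z, exp (q (-z) - q z) = 1 := fun z => by
    rw [exp_sub, hκq, hκq, heven, div_self (hκq z ▸ exp_ne_zero _)]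
  simpa [hq₀, sub_eq_zero] using eq_of_exp_eq_one (by fun_prop) hexp z 0

end ExpLift

theorem continuous_quadratic_form_general (κ : ℂ → ℂ)
    (hcont : Continuous κ)
    (hne : ∀ z : ℂ, κ z ≠ 0)
    (heven : ∀ z : ℂ, κ (-z) = κ z)
    (hbil₁ : ∀ z z' w : ℂ, assocForm κ (z + z') w = assocForm κ z w * assocForm κ z' w) :
    ∃ ζ χ ξ : ℂ, ∀ z : ℂ,
      κ z = Complex.exp (ζ * z ^ 2 + χ * (z * (starRingEnd ℂ) z) + ξ * ((starRingEnd ℂ) z) ^ 2) := by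
  have hκ₀ : exp 0 = κ 0 := by
    rw [exp_zero, apply_zero_eq_one_of_assocForm_add_left (hne 0) (hbil₁ 0 0 0)]
  obtain ⟨q, hq, hq₀, hκq⟩ := exists_continuous_exp_eq hcont hne hκ₀
  obtain ⟨ζ, χ, ξ, h⟩ := exists_eq_of_polar_add_left (apply_neg_of_exp_eq hκq hq hq₀ heven)
    (polar_add_left_of_exp_eq hκq hq hq₀ hbil₁) hq
  exact ⟨ζ, χ, ξ, fun z => by rw [← hκq, h]⟩

/-- A continuous quadratic form `κ : ℂ → ℂ^×` on `(ℂ,+)` is of the form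
`κ(z) = exp(ζ z² + χ z z̄ + ξ z̄²)`. -/
theorem continuous_quadratic_form (κ : ℂ → ℂ)
    (hcont : Continuous κ)
    (hne : ∀ z : ℂ, κ z ≠ 0)
    (heven : ∀ z : ℂ, κ (-z) = κ z)
    (hbil₁ : ∀ z z' w : ℂ, assocForm κ (z + z') w = assocForm κ z w * assocForm κ z' w)
    (hbil₂ : ∀ z w w' : ℂ, assocForm κ z (w + w') = assocForm κ z w * assocForm κ z w') :
    ∃ ζ χ ξ : ℂ, ∀ z : ℂ,
      κ z = Complex.exp (ζ * z ^ 2 + χ * (z * (starRingEnd ℂ) z) + ξ * ((starRingEnd ℂ) z) ^ 2) :=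
  continuous_quadratic_form_general κ hcont hne heven hbil₁
end

section
/- Let U be a subgroup of (ℂ,+) such that for all a, b ∈ U the product ab lies in 2ℤ. Then U ⊆ ℝ or U ⊆ iℝ, and U is discrete; moreover if U ≠ {0} then U = γℤ for some γ ∈ ℂ with γ² ∈ 2ℤ. -/
open Complex

/-!
Since `a² ∈ 2ℤ ⊆ ℝ`, every `a ∈ U` satisfies `2 · re a · im a = im (a²) = 0`, so it lies on one
of the two axes; a sum of a non-real and a non-imaginary element would lie on neither, so all of
`U` lies on one axis. Moreover `‖a‖² = |a²|` is a nonzero integer for `a ≠ 0`, so `0` is isolated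
in `U`; pulled back to `ℝ` along the axis, `U` is then cyclic by the archimedean property.
-/

theorem Complex.re_eq_zero_or_im_eq_zero_of_im_sq_eq_zero {a : ℂ} (h : (a ^ 2).im = 0) :
    a.re = 0 ∨ a.im = 0 := by
  have : 2 * (a.re * a.im) = 0 := by
    rw [sq, mul_im] at h
    linarith
  simpa using this

theorem Complex.one_le_norm_of_sq_eq_intCast {a : ℂ} {n : ℤ} (ha : a ≠ 0) (h : a ^ 2 = n) :
    1 ≤ ‖a‖ := by
  have hn : n ≠ 0 := by
    rintro rfl
    exact ha (pow_eq_zero_iff two_ne_zero |>.1 (by simpa using h))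
  have hsq : 1 ≤ ‖a‖ ^ 2 := by
    rw [← norm_pow, h, norm_intCast]
    exact_mod_cast Int.one_le_abs hn
  nlinarith [norm_nonneg a]

namespace AddSubgroup

theorem forall_im_eq_zero_or_forall_re_eq_zero (U : AddSubgroup ℂ)
    (hU : ∀ a ∈ U, a.re = 0 ∨ a.im = 0) :
    (∀ a ∈ U, a.im = 0) ∨ (∀ a ∈ U, a.re = 0) := by
  by_contra! ⟨⟨a, ha, ha_im⟩, ⟨b, hb, hb_re⟩⟩
  have ha_re : a.re = 0 := (hU a ha).resolve_right ha_im
  have hb_im : b.im = 0 := (hU b hb).resolve_left hb_re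
  rcases hU (a + b) (U.add_mem ha hb) with h | h
  · exact hb_re (by simpa [ha_re] using h)
  · exact ha_im (by simpa [hb_im] using h)

theorem exists_eq_zmultiples_of_le_line_of_isolated_zero (U : AddSubgroup ℂ) {u : ℂ}
    (hu : ‖u‖ = 1) (hline : ∀ z ∈ U, ∃ x : ℝ, z = x * u) {ε : ℝ} (hε : 0 < ε)
    (hsep : ∀ a ∈ U, a ≠ 0 → ε ≤ ‖a‖) : ∃ γ : ℂ, U = zmultiples γ := by
  let f : ℝ →+ ℂ := (AddMonoidHom.mulRight u).comp ofRealHom.toAddMonoidHom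
  have hf : ∀ x : ℝ, f x = x * u := fun _ => rfl
  have hdisj : Disjoint ((U.comap f : AddSubgroup ℝ) : Set ℝ) (Set.Ioo 0 ε) := by
    refine Set.disjoint_left.2 fun x hx ⟨hx0, hxε⟩ => ?_
    have hne : f x ≠ 0 := by
      rw [hf]
      exact mul_ne_zero (ofReal_ne_zero.2 hx0.ne') (norm_ne_zero_iff.1 (by simp [hu]))
    have := hsep _ hx hne
    rw [hf, norm_mul, hu, mul_one, norm_real, Real.norm_of_nonneg hx0.le] at this
    linarith
  obtain ⟨b, hb⟩ := cyclic_of_isolated_zero hε hdisj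
  refine ⟨f b, le_antisymm (fun z hz => ?_) (zmultiples_le_of_mem ?_)⟩
  · obtain ⟨x, rfl⟩ := hline z hz
    have hx : x ∈ U.comap f := by simpa [hf] using hz
    rw [hb, ← zmultiples_eq_closure] at hx
    obtain ⟨m, rfl⟩ := mem_zmultiples_iff.1 hx
    exact mem_zmultiples_iff.2 ⟨m, by rw [← map_zsmul, hf]⟩
  · exact (hb ▸ subset_closure rfl : b ∈ U.comap f)

end AddSubgroup

/-- A subgroup `U ≤ (ℂ,+)` with `ab ∈ 2ℤ` for all `a,b ∈ U` lies on the real or the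
imaginary axis, is discrete, and if nonzero equals `γℤ` with `γ² ∈ 2ℤ`. -/
theorem subgroup_with_even_products (U : AddSubgroup ℂ)
    (h : ∀ a ∈ U, ∀ b ∈ U, ∃ n : ℤ, a * b = 2 * n) :
    ((∀ a ∈ U, (a : ℂ).im = 0) ∨ (∀ a ∈ U, (a : ℂ).re = 0)) ∧
    (∃ ε : ℝ, 0 < ε ∧ ∀ a ∈ U, a ≠ 0 → ε ≤ ‖a‖) ∧
    (U ≠ ⊥ → ∃ γ : ℂ, (∃ n : ℤ, γ ^ 2 = 2 * n) ∧ ∀ z : ℂ, z ∈ U ↔ ∃ m : ℤ, z = m * γ) := by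
  have hsq : ∀ a ∈ U, ∃ n : ℤ, a ^ 2 = 2 * n := fun a ha => by simpa [sq] using h a ha a ha
  have haxis : (∀ a ∈ U, a.im = 0) ∨ (∀ a ∈ U, a.re = 0) :=
    U.forall_im_eq_zero_or_forall_re_eq_zero fun a ha =>
      re_eq_zero_or_im_eq_zero_of_im_sq_eq_zero <| by
        obtain ⟨n, hn⟩ := hsq a ha
        simp [hn]
  have hsep : ∀ a ∈ U, a ≠ 0 → 1 ≤ ‖a‖ := fun a ha ha0 => by
    obtain ⟨n, hn⟩ := hsq a ha
    exact one_le_norm_of_sq_eq_intCast (n := 2 * n) ha0 (by push_cast; exact hn)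
  refine ⟨haxis, ⟨1, one_pos, hsep⟩, fun _ => ?_⟩
  obtain ⟨γ, rfl⟩ : ∃ γ, U = AddSubgroup.zmultiples γ := by
    rcases haxis with hre | him
    · refine U.exists_eq_zmultiples_of_le_line_of_isolated_zero norm_one
        (fun z hz => ⟨z.re, ?_⟩) one_pos hsep
      simp [Complex.ext_iff, hre z hz]
    · refine U.exists_eq_zmultiples_of_le_line_of_isolated_zero norm_I
        (fun z hz => ⟨z.im, ?_⟩) one_pos hsep
      simp [Complex.ext_iff, him z hz]
  refine ⟨γ, hsq γ (AddSubgroup.mem_zmultiples γ), fun z => ?_⟩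
  simp [AddSubgroup.mem_zmultiples_iff, eq_comm]
end

section
/- Let Δ_t be defined on the generators of the restricted quantum group U_q sl(2) (q = e^{iπ/p}, t an odd integer) by Δ_t(E) = E⊗K + (e_0 + q^t e_1)⊗E, Δ_t(F) = F⊗1 + (e_0 + q^{-t}e_1)K^{-1}⊗F, Δ_t(K) = K⊗K, where e_0 = (1+K^p)/2, e_1 = (1−K^p)/2. Then Δ_t extends to an algebra homomorphism U_q sl(2) → U_q sl(2) ⊗ U_q sl(2), i.e. it is compatible with all defining relations including E^p = F^p = 0 and K^{2p} = 1. -/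
noncomputable section

open Complex
open scoped TensorProduct

/-- The idempotent `e₀ = (1 + K^p)/2`. -/
def idem0 (p : ℕ) {A : Type*} [Ring A] [Algebra ℂ A] (K : A) : A :=
  (2 : ℂ)⁻¹ • (1 + K ^ p)

/-- The idempotent `e₁ = 1 − e₀`. -/
def idem1 (p : ℕ) {A : Type*} [Ring A] [Algebra ℂ A] (K : A) : A :=
  1 - idem0 p K

/-!
Since `q²` is a primitive `p`-th root of unity, `K ^ p` commutes with `E` and `F`, and with
`K ^ (2p) = 1` the elements `e₀, e₁` are complementary idempotents in the commutant of
`K ^ p`. Hence `e₀ + q^t e₁` is invertible with inverse `e₀ + q^{-t} e₁` and commutes with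
`E`, `F`, `K`, `K⁻¹`, which is all the Cartan and commutator relations need.

For `E^p = F^p = 0`: the two summands `a`, `b` of `Δ_t(E)` (and of `Δ_t(F)`) satisfy
`b a = ζ a b` with `ζ = q^{±2}` a primitive `p`-th root of unity. In the `ζ`-binomial expansion
of `(a + b)^p` every Gaussian binomial `[p choose i]_ζ` with `0 < i < p` vanishes, so
`(a + b)^p = a^p + b^p = 0`.
-/

open Finset

section QBinomial

variable {R : Type*} [CommRing R]

/-- The Gaussian binomial coefficient `[i + j choose i]_ζ`, normalised as the coefficient of
`a ^ i * b ^ j` in `(a + b) ^ (i + j)` when `b * a = ζ • (a * b)`. -/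
def qBinom (ζ : R) : ℕ → ℕ → R
  | 0, _ => 1
  | _ + 1, 0 => 1
  | i + 1, j + 1 => ζ ^ (j + 1) * qBinom ζ i (j + 1) + qBinom ζ (i + 1) j

@[simp] theorem qBinom_zero_left (ζ : R) (j : ℕ) : qBinom ζ 0 j = 1 := by
  rw [qBinom]

@[simp] theorem qBinom_zero_right (ζ : R) (i : ℕ) : qBinom ζ i 0 = 1 := by
  cases i <;> rw [qBinom]

theorem qBinom_succ_succ (ζ : R) (i j : ℕ) :
    qBinom ζ (i + 1) (j + 1) = ζ ^ (j + 1) * qBinom ζ i (j + 1) + qBinom ζ (i + 1) j := by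
  rw [qBinom]

/-- The `q`-analogue of `(i + 1) * C(i + j + 1, i + 1) = (j + 1) * C(i + j + 1, i)`. -/
theorem one_sub_pow_mul_qBinom (ζ : R) :
    ∀ i j, (1 - ζ ^ (i + 1)) * qBinom ζ (i + 1) j = (1 - ζ ^ (j + 1)) * qBinom ζ i (j + 1)
  | 0, 0 => by simp
  | i + 1, 0 => by
    have ih := one_sub_pow_mul_qBinom ζ i 0
    simp only [qBinom_zero_right, qBinom_succ_succ] at ih ⊢
    linear_combination ζ * ih
  | 0, j + 1 => by
    have ih := one_sub_pow_mul_qBinom ζ 0 j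
    simp only [qBinom_zero_left, qBinom_succ_succ] at ih ⊢
    linear_combination ih
  | i + 1, j + 1 => by
    have ih₁ := one_sub_pow_mul_qBinom ζ (i + 1) j
    have ih₂ := one_sub_pow_mul_qBinom ζ i (j + 1)
    rw [qBinom_succ_succ ζ (i + 1) j, qBinom_succ_succ ζ i (j + 1)]
    linear_combination ih₁ + ζ ^ (j + 2) * ih₂

theorem IsPrimitiveRoot.qBinom_eq_zero [IsDomain R] {ζ : R} {i j : ℕ}
    (hζ : IsPrimitiveRoot ζ (i + j)) (hi : i ≠ 0) (hj : j ≠ 0) : qBinom ζ i j = 0 := by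
  induction i generalizing j with
  | zero => exact absurd rfl hi
  | succ i ih =>
    have hζi : 1 - ζ ^ (i + 1) ≠ 0 :=
      sub_ne_zero.mpr (hζ.pow_ne_one_of_pos_of_lt i.succ_ne_zero (by omega)).symm
    have hcross : (1 - ζ ^ (i + 1)) * qBinom ζ (i + 1) j = 0 := by
      rw [one_sub_pow_mul_qBinom]
      rcases eq_or_ne i 0 with rfl | hi'
      · rw [add_comm, hζ.pow_eq_one, sub_self, zero_mul]
      · rw [ih (by convert hζ using 1; omega) hi' j.succ_ne_zero, mul_zero]
    exact (mul_eq_zero.mp hcross).resolve_left hζi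

end QBinomial

section SkewCommuting

variable {R A : Type*} [CommRing R] [Ring A] [Algebra R A] {ζ : R} {a b : A}

theorem pow_mul_eq_smul_mul_pow (h : b * a = ζ • (a * b)) (k : ℕ) :
    b ^ k * a = ζ ^ k • (a * b ^ k) := by
  induction k with
  | zero => simp
  | succ k ih =>
    rw [pow_succ, mul_assoc, h, mul_smul_comm, ← mul_assoc, ih, smul_mul_assoc, smul_smul,
      mul_assoc, ← pow_succ, ← pow_succ']

theorem commute_pow_of_mul_eq_smul {n : ℕ} (hζ : ζ ^ n = 1) (h : b * a = ζ • (a * b)) :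
    Commute (b ^ n) a := by
  rw [Commute, SemiconjBy, pow_mul_eq_smul_mul_pow h, hζ, one_smul]

theorem mul_mul_eq_smul_mul_mul_of_mul_eq_one {b' c : A} (hbb' : b * b' = 1)
    (hb'b : b' * b = 1) (hc : Commute c a) (h : b * a = ζ • (a * b)) :
    a * (c * b') = ζ • (c * b' * a) :=
  calc a * (c * b') = c * (b' * (b * a) * b') := by
        rw [← mul_assoc, ← hc.eq, ← mul_assoc b', hb'b, one_mul, mul_assoc]
    _ = ζ • (c * b' * a * (b * b')) := by
        rw [h, mul_smul_comm, smul_mul_assoc, mul_smul_comm]; simp only [mul_assoc]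
    _ = ζ • (c * b' * a) := by rw [hbb', mul_one]

theorem add_pow_eq_sum_qBinom (h : b * a = ζ • (a * b)) (n : ℕ) :
    (a + b) ^ n = ∑ x ∈ antidiagonal n, qBinom ζ x.1 x.2 • (a ^ x.1 * b ^ x.2) := by
  induction n with
  | zero => simp
  | succ n ih =>
    have hterm (i j : ℕ) : (a ^ i * b ^ j) * (a + b) =
        ζ ^ j • (a ^ (i + 1) * b ^ j) + a ^ i * b ^ (j + 1) := by
      rw [mul_add, mul_assoc, pow_mul_eq_smul_mul_pow h, mul_smul_comm, ← mul_assoc, ← pow_succ,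
        mul_assoc, ← pow_succ]
    rw [pow_succ, ih, sum_mul]
    simp_rw [smul_mul_assoc, hterm, smul_add, smul_smul, sum_add_distrib]
    rcases n with _ | m
    · simp [Finset.Nat.antidiagonal_succ, add_comm]
    rw [Finset.Nat.sum_antidiagonal_succ', Finset.Nat.sum_antidiagonal_succ,
      Finset.Nat.antidiagonal_succ_succ', sum_cons, sum_cons, sum_map]
    simp only [Function.Embedding.coe_prodMap, Function.Embedding.coeFn_mk, Prod.map_fst,
      Prod.map_snd, Nat.succ_eq_add_one, qBinom_succ_succ, add_smul, sum_add_distrib,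
      qBinom_zero_left, qBinom_zero_right, pow_zero, mul_one, one_smul, mul_comm (qBinom ζ _ _)]
    abel

theorem IsPrimitiveRoot.add_pow_eq_zero [IsDomain R] {n : ℕ} (hζ : IsPrimitiveRoot ζ n)
    (h : b * a = ζ • (a * b)) (ha : a ^ n = 0) (hb : b ^ n = 0) : (a + b) ^ n = 0 := by
  rw [add_pow_eq_sum_qBinom h]
  refine sum_eq_zero fun ⟨i, j⟩ hij => ?_
  obtain rfl : i + j = n := HasAntidiagonal.mem_antidiagonal.mp hij
  rcases eq_or_ne i 0 with rfl | hi
  · rw [zero_add] at hb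
    rw [hb, mul_zero, smul_zero]
  rcases eq_or_ne j 0 with rfl | hj
  · rw [add_zero] at ha
    rw [ha, zero_mul, smul_zero]
  rw [hζ.qBinom_eq_zero hi hj, zero_smul]

end SkewCommuting

theorem add_mul_add_sub_add_mul_add {R : Type*} [Ring R] {a b c d : R} (had : Commute a d)
    (hbc : Commute b c) :
    (a + b) * (c + d) - (c + d) * (a + b) = (a * c - c * a) + (b * d - d * b) := by
  simp only [add_mul, mul_add, had.eq, hbc.eq]
  abel

theorem IsIdempotentElem.add_smul_one_sub_mul {R A : Type*} [CommRing R] [Ring A] [Algebra R A]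
    {e : A} (he : IsIdempotentElem e) (s s' : R) :
    (e + s • (1 - e)) * (e + s' • (1 - e)) = e + (s * s') • (1 - e) := by
  simp only [mul_add, add_mul, smul_mul_assoc, mul_smul_comm, he.eq, he.mul_one_sub_self,
    he.one_sub_mul_self, he.one_sub.eq, smul_zero, smul_smul, zero_add, add_zero, mul_comm s']

theorem isPrimitiveRoot_sq_exp_pi_mul_I_div {n : ℕ} (hn : n ≠ 0) :
    IsPrimitiveRoot (exp (Real.pi * I / n) ^ 2) n := by
  rw [← exp_nat_mul]
  convert isPrimitiveRoot_exp n hn using 2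
  push_cast
  ring

section Idempotents

variable {A : Type*} [Ring A] [Algebra ℂ A] {p : ℕ} {K x : A}

theorem isIdempotentElem_idem0 (hK : K ^ (2 * p) = 1) : IsIdempotentElem (idem0 p K) := by
  have hsq : (1 + K ^ p) * (1 + K ^ p) = (2 : ℂ) • (1 + K ^ p) := by
    have hKK : K ^ p * K ^ p = 1 := by rw [← pow_add, ← two_mul, hK]
    simp only [add_mul, mul_add, one_mul, mul_one, hKK, two_smul]
    abel
  rw [IsIdempotentElem, idem0, smul_mul_smul_comm, hsq, smul_smul]
  norm_num

theorem Commute.idem0_add_smul_idem1_right (h : Commute x (K ^ p)) (s : ℂ) :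
    Commute x (idem0 p K + s • idem1 p K) := by
  have h₀ : Commute x (idem0 p K) := ((Commute.one_right x).add_right h).smul_right _
  exact h₀.add_right (((Commute.one_right x).sub_right h₀).smul_right s)

theorem Commute.idem0_add_smul_idem1_left (h : Commute (K ^ p) x) (s : ℂ) :
    Commute (idem0 p K + s • idem1 p K) x :=
  (h.symm.idem0_add_smul_idem1_right s).symm

theorem idem0_add_smul_idem1_mul_eq_one (hK : K ^ (2 * p) = 1) {s s' : ℂ} (hss' : s * s' = 1) :
    (idem0 p K + s • idem1 p K) * (idem0 p K + s' • idem1 p K) = 1 := by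
  rw [idem1, (isIdempotentElem_idem0 hK).add_smul_one_sub_mul, hss', one_smul, add_sub_cancel]

end Idempotents

section Coproduct

open Algebra.TensorProduct TensorProduct

variable {R A : Type*} [CommRing R] [Ring A] [Algebra R A] {ζ : R}

theorem tmul_self_mul_tmul_add_tmul {K x y z w : A} (hx : K * x = ζ • (x * K))
    (hy : Commute K y) (hz : Commute K z) (hw : K * w = ζ • (w * K)) :
    (K ⊗ₜ[R] K) * (x ⊗ₜ[R] y + z ⊗ₜ[R] w) = ζ • ((x ⊗ₜ[R] y + z ⊗ₜ[R] w) * (K ⊗ₜ[R] K)) := by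
  simp only [mul_add, add_mul, tmul_mul_tmul, hx, hy.eq, hz.eq, hw, smul_tmul', tmul_smul,
    smul_add]

theorem IsPrimitiveRoot.tmul_add_tmul_pow_eq_zero [IsDomain R] {n : ℕ} (hζ : IsPrimitiveRoot ζ n)
    {x y z w : A} (hx : x ^ n = 0) (hw : w ^ n = 0)
    (h : (x ⊗ₜ[R] y) * (z ⊗ₜ[R] w) = ζ • ((z ⊗ₜ[R] w) * (x ⊗ₜ[R] y))) :
    (x ⊗ₜ[R] y + z ⊗ₜ[R] w) ^ n = 0 := by
  rw [add_comm]
  exact hζ.add_pow_eq_zero h (by rw [tmul_pow, hw, tmul_zero]) (by rw [tmul_pow, hx, zero_tmul])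

theorem commute_tmul_of_mul_eq_smul {ζ' : R} {x y z w : A} (hxz : x * z = ζ • (z * x))
    (hyw : y * w = ζ' • (w * y)) (hζζ' : ζ * ζ' = 1) : Commute (x ⊗ₜ[R] y) (z ⊗ₜ[R] w) := by
  rw [Commute, SemiconjBy, tmul_mul_tmul, tmul_mul_tmul, hxz, hyw, smul_tmul_smul, hζζ', one_smul]

theorem tmul_add_tmul_commutator {E F K K' g c : A} (hgc : g * c = 1) (hcg : c * g = 1)
    (hK'g : Commute K' g) (hgF : Commute g F) (hEF : Commute (E ⊗ₜ[R] K) ((c * K') ⊗ₜ[R] F)) :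
    (E ⊗ₜ[R] K + g ⊗ₜ[R] E) * (F ⊗ₜ[R] 1 + (c * K') ⊗ₜ[R] F)
        - (F ⊗ₜ[R] 1 + (c * K') ⊗ₜ[R] F) * (E ⊗ₜ[R] K + g ⊗ₜ[R] E)
      = (E * F - F * E) ⊗ₜ[R] K + K' ⊗ₜ[R] (E * F - F * E) := by
  have hgF' : Commute (g ⊗ₜ[R] E) (F ⊗ₜ[R] 1) := by
    rw [Commute, SemiconjBy, tmul_mul_tmul, tmul_mul_tmul, hgF.eq, mul_one, one_mul]
  have hgcK' : g * (c * K') = K' := by rw [← mul_assoc, hgc, one_mul]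
  have hcK'g : c * K' * g = K' := by rw [mul_assoc, hK'g.eq, ← mul_assoc, hcg, one_mul]
  rw [add_mul_add_sub_add_mul_add hEF hgF', tmul_mul_tmul, tmul_mul_tmul, tmul_mul_tmul,
    tmul_mul_tmul, mul_one, one_mul, hgcK', hcK'g, sub_tmul, tmul_sub]

end Coproduct

open Algebra.TensorProduct TensorProduct in
theorem coproduct_compatible_with_relations_general
    (p : ℕ) (hp : 2 ≤ p) (t : ℤ)
    (A : Type*) [Ring A] [Algebra ℂ A]
    (E F K Kinv : A)
    (q : ℂ) (hq : q = Complex.exp (Real.pi * Complex.I / p))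
    (hKinv : K * Kinv = 1) (hKinv' : Kinv * K = 1)
    (hKE : K * E = (q ^ 2) • (E * K))
    (hKF : K * F = ((q ^ 2)⁻¹) • (F * K))
    (hEF : E * F - F * E = ((q - q⁻¹)⁻¹) • (K - Kinv))
    (hEp : E ^ p = 0) (hFp : F ^ p = 0) (hK2p : K ^ (2 * p) = 1) :
    let ΔE : A ⊗[ℂ] A := E ⊗ₜ[ℂ] K + (idem0 p K + q ^ t • idem1 p K) ⊗ₜ[ℂ] E
    let ΔF : A ⊗[ℂ] A := F ⊗ₜ[ℂ] 1 + ((idem0 p K + q ^ (-t) • idem1 p K) * Kinv) ⊗ₜ[ℂ] F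
    let ΔK : A ⊗[ℂ] A := K ⊗ₜ[ℂ] K
    let ΔKinv : A ⊗[ℂ] A := Kinv ⊗ₜ[ℂ] Kinv
    ΔK * ΔKinv = 1 ∧ ΔKinv * ΔK = 1 ∧
    ΔK * ΔE = (q ^ 2) • (ΔE * ΔK) ∧
    ΔK * ΔF = ((q ^ 2)⁻¹) • (ΔF * ΔK) ∧
    ΔE * ΔF - ΔF * ΔE = ((q - q⁻¹)⁻¹) • (ΔK - ΔKinv) ∧
    ΔE ^ p = 0 ∧ ΔF ^ p = 0 ∧ ΔK ^ (2 * p) = 1 := by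
  dsimp only
  have hζ : IsPrimitiveRoot (q ^ 2) p := hq ▸ isPrimitiveRoot_sq_exp_pi_mul_I_div (by omega)
  have hq0 : q ≠ 0 := hq ▸ exp_ne_zero _
  have hKKinv : Commute K Kinv := hKinv.trans hKinv'.symm
  have hKKp : Commute K (K ^ p) := (Commute.refl K).pow_right p
  have hKpE : Commute (K ^ p) E := commute_pow_of_mul_eq_smul hζ.pow_eq_one hKE
  have hKpF : Commute (K ^ p) F := commute_pow_of_mul_eq_smul hζ.inv.pow_eq_one hKF
  rw [zpow_neg]
  set g := idem0 p K + q ^ t • idem1 p K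
  set c := idem0 p K + (q ^ t)⁻¹ • idem1 p K
  have hqt : q ^ t ≠ 0 := zpow_ne_zero t hq0
  have hgc : g * c = 1 := idem0_add_smul_idem1_mul_eq_one hK2p (mul_inv_cancel₀ hqt)
  have hcg : c * g = 1 := idem0_add_smul_idem1_mul_eq_one hK2p (inv_mul_cancel₀ hqt)
  have hEcKinv : E * (c * Kinv) = q ^ 2 • (c * Kinv * E) :=
    mul_mul_eq_smul_mul_mul_of_mul_eq_one hKinv hKinv' (hKpE.idem0_add_smul_idem1_left _) hKE
  have hFcKinv : F * (c * Kinv) = (q ^ 2)⁻¹ • (c * Kinv * F) :=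
    mul_mul_eq_smul_mul_mul_of_mul_eq_one hKinv hKinv' (hKpF.idem0_add_smul_idem1_left _) hKF
  refine ⟨?_, ?_, ?_, ?_, ?_, ?_, ?_, ?_⟩
  · rw [tmul_mul_tmul, hKinv, one_def]
  · rw [tmul_mul_tmul, hKinv', one_def]
  · exact tmul_self_mul_tmul_add_tmul hKE (Commute.refl K) (hKKp.idem0_add_smul_idem1_right _) hKE
  · exact tmul_self_mul_tmul_add_tmul hKF (Commute.one_right K)
      ((hKKp.idem0_add_smul_idem1_right _).mul_right hKKinv) hKF
  · rw [tmul_add_tmul_commutator hgc hcg ((hKKinv.symm.pow_right p).idem0_add_smul_idem1_right _)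
      (hKpF.idem0_add_smul_idem1_left _)
      (commute_tmul_of_mul_eq_smul hEcKinv hKF (mul_inv_cancel₀ (pow_ne_zero 2 hq0))),
      hEF, ← smul_tmul', tmul_smul, ← smul_add, sub_tmul, tmul_sub, sub_add_sub_cancel]
  · refine hζ.tmul_add_tmul_pow_eq_zero hEp hEp ?_
    rw [tmul_mul_tmul, tmul_mul_tmul, hKE, (hKpE.idem0_add_smul_idem1_left _).eq, tmul_smul]
  · refine hζ.inv.tmul_add_tmul_pow_eq_zero hFp hFp ?_
    rw [tmul_mul_tmul, tmul_mul_tmul, mul_one, one_mul, hFcKinv, smul_tmul']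
  · rw [tmul_pow, hK2p, one_def]

/-- The modified coproduct `Δ_t` of the quasi-Hopf algebra `Q̄(p,t)` is compatible with
all defining relations of `U_q sl(2)`: the images
`Δ_t(E) = E⊗K + (e₀+q^t e₁)⊗E`, `Δ_t(F) = F⊗1 + (e₀+q^{-t}e₁)K⁻¹⊗F`, `Δ_t(K) = K⊗K`
satisfy the relations `KEK⁻¹=q²E`, `KFK⁻¹=q⁻²F`, `[E,F]=(K−K⁻¹)/(q−q⁻¹)`,
`E^p = F^p = 0`, `K^{2p} = 1` in `A ⊗ A`; hence `Δ_t` extends to an algebra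
homomorphism. -/
theorem coproduct_compatible_with_relations
    (p : ℕ) (hp : 2 ≤ p) (t : ℤ) (ht : Odd t)
    (A : Type*) [Ring A] [Algebra ℂ A]
    (E F K Kinv : A)
    (q : ℂ) (hq : q = Complex.exp (Real.pi * Complex.I / p))
    (hKinv : K * Kinv = 1) (hKinv' : Kinv * K = 1)
    (hKE : K * E = (q ^ 2) • (E * K))
    (hKF : K * F = ((q ^ 2)⁻¹) • (F * K))
    (hEF : E * F - F * E = ((q - q⁻¹)⁻¹) • (K - Kinv))
    (hEp : E ^ p = 0) (hFp : F ^ p = 0) (hK2p : K ^ (2 * p) = 1) :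
    let ΔE : A ⊗[ℂ] A := E ⊗ₜ[ℂ] K + (idem0 p K + q ^ t • idem1 p K) ⊗ₜ[ℂ] E
    let ΔF : A ⊗[ℂ] A := F ⊗ₜ[ℂ] 1 + ((idem0 p K + q ^ (-t) • idem1 p K) * Kinv) ⊗ₜ[ℂ] F
    let ΔK : A ⊗[ℂ] A := K ⊗ₜ[ℂ] K
    let ΔKinv : A ⊗[ℂ] A := Kinv ⊗ₜ[ℂ] Kinv
    ΔK * ΔKinv = 1 ∧ ΔKinv * ΔK = 1 ∧
    ΔK * ΔE = (q ^ 2) • (ΔE * ΔK) ∧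
    ΔK * ΔF = ((q ^ 2)⁻¹) • (ΔF * ΔK) ∧
    ΔE * ΔF - ΔF * ΔE = ((q - q⁻¹)⁻¹) • (ΔK - ΔKinv) ∧
    ΔE ^ p = 0 ∧ ΔF ^ p = 0 ∧ ΔK ^ (2 * p) = 1 :=
  coproduct_compatible_with_relations_general p hp t A E F K Kinv q hq hKinv hKinv' hKE hKF hEF hEp
    hFp hK2p
end
end

section
/- With Δ_t, S_t as in the quasi-Hopf algebra Q̄(p,t) (S_t(E) = −EK^{-1}(e_0 + q^t e_1), S_t(F) = −KF(e_0 + q^{-t}e_1), S_t(K) = K^{-1}), the antipode identity Σ S_t(a')·a'' = ε(a)·1 holds for all a ∈ Q̄(p,t), where Δ_t(a) = Σ a'⊗a'' and ε is the counit (ε(E)=ε(F)=0, ε(K)=1). -/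
noncomputable section

open Complex
open scoped TensorProduct

/-- For the quasi-Hopf algebra `Q̄(p,t)` with coproduct `Δ_t`, antipode `S_t` and counit
`ε`, the antipode identity `Σ S_t(a')·a'' = ε(a)·1` holds for all `a`. -/
theorem antipode_identity
    (p : ℕ) (hp : 2 ≤ p) (t : ℤ) (ht : Odd t)
    (A : Type*) [Ring A] [Algebra ℂ A]
    (E F K Kinv : A)
    (q : ℂ) (hq : q = Complex.exp (Real.pi * Complex.I / p))
    (hKinv : K * Kinv = 1) (hKinv' : Kinv * K = 1)
    (hKE : K * E = (q ^ 2) • (E * K))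
    (hKF : K * F = ((q ^ 2)⁻¹) • (F * K))
    (hEF : E * F - F * E = ((q - q⁻¹)⁻¹) • (K - Kinv))
    (hEp : E ^ p = 0) (hFp : F ^ p = 0) (hK2p : K ^ (2 * p) = 1)
    (hgen : Algebra.adjoin ℂ ({E, F, K, Kinv} : Set A) = ⊤)
    (Δ : A →ₐ[ℂ] A ⊗[ℂ] A)
    (hΔE : Δ E = E ⊗ₜ[ℂ] K + (idem0 p K + q ^ t • idem1 p K) ⊗ₜ[ℂ] E)
    (hΔF : Δ F = F ⊗ₜ[ℂ] 1 + ((idem0 p K + q ^ (-t) • idem1 p K) * Kinv) ⊗ₜ[ℂ] F)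
    (hΔK : Δ K = K ⊗ₜ[ℂ] K) (hΔKinv : Δ Kinv = Kinv ⊗ₜ[ℂ] Kinv)
    (ε : A →ₐ[ℂ] ℂ)
    (hεE : ε E = 0) (hεF : ε F = 0) (hεK : ε K = 1) (hεKinv : ε Kinv = 1)
    (S : A →ₗ[ℂ] A) (hS1 : S 1 = 1) (hSmul : ∀ x y : A, S (x * y) = S y * S x)
    (hSE : S E = -(E * Kinv * (idem0 p K + q ^ t • idem1 p K)))
    (hSF : S F = -(K * F * (idem0 p K + q ^ (-t) • idem1 p K)))
    (hSK : S K = Kinv) (hSKinv : S Kinv = K) :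
    ∀ a : A,
      (LinearMap.mul' ℂ A) ((TensorProduct.map S LinearMap.id) (Δ a)) = ε a • (1 : A) := by
  -- basic scalar facts
  have hp0 : (p : ℂ) ≠ 0 := Nat.cast_ne_zero.mpr (by omega)
  have hq2p : (q ^ 2) ^ p = 1 := by
    rw [hq, ← pow_mul, ← Complex.exp_nat_mul]
    rw [show ((2 * p : ℕ) : ℂ) * (Real.pi * Complex.I / p) = 2 * Real.pi * Complex.I by
      push_cast; field_simp]
    exact Complex.exp_two_pi_mul_I
  have hq2p' : ((q ^ 2)⁻¹) ^ p = 1 := by rw [inv_pow, hq2p, inv_one]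
  -- K powers commute with E and F
  have hKnE : ∀ n : ℕ, K ^ n * E = ((q ^ 2) ^ n) • (E * K ^ n) := by
    intro n
    induction n with
    | zero => simp
    | succ n ih =>
      rw [pow_succ, mul_assoc, hKE, mul_smul_comm, ← mul_assoc, ih, smul_mul_assoc,
        smul_smul, mul_assoc, ← pow_succ, ← pow_succ']
  have hKpE : K ^ p * E = E * K ^ p := by rw [hKnE p, hq2p, one_smul]
  have hKnF : ∀ n : ℕ, K ^ n * F = (((q ^ 2)⁻¹) ^ n) • (F * K ^ n) := by
    intro n
    induction n with
    | zero => simp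
    | succ n ih =>
      rw [pow_succ, mul_assoc, hKF, mul_smul_comm, ← mul_assoc, ih, smul_mul_assoc,
        smul_smul, mul_assoc, ← pow_succ, ← pow_succ']
  have hKpF : K ^ p * F = F * K ^ p := by rw [hKnF p, hq2p', one_smul]
  have hComm : Commute K Kinv := by
    unfold Commute SemiconjBy; rw [hKinv, hKinv']
  have hKpKp : K ^ p * K ^ p = 1 := by rw [← pow_add, ← two_mul, hK2p]
  have hKinvp : Kinv ^ p = K ^ p := by
    have h1 : Kinv ^ p * K ^ p = 1 := by
      rw [← Commute.mul_pow hComm.symm, hKinv', one_pow]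
    calc Kinv ^ p = Kinv ^ p * (K ^ p * K ^ p) := by rw [hKpKp, mul_one]
    _ = (Kinv ^ p * K ^ p) * K ^ p := by rw [mul_assoc]
    _ = K ^ p := by rw [h1, one_mul]
  have hSKn : ∀ n : ℕ, S (K ^ n) = Kinv ^ n := by
    intro n
    induction n with
    | zero => simpa using hS1
    | succ n ih => rw [pow_succ, hSmul, hSK, ih, ← pow_succ']
  -- β and γ
  set e0 : A := idem0 p K with he0
  set e1 : A := idem1 p K with he1
  set β : A := e0 + q ^ t • e1 with hβ
  set γ : A := e0 + q ^ (-t) • e1 with hγ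
  have hSe0 : S e0 = e0 := by
    rw [he0, idem0, map_smul, map_add, hS1, hSKn, hKinvp]
  have hSβ : S β = β := by
    rw [hβ, map_add, hSe0, map_smul, he1, idem1, map_sub, hS1, hSe0]
  have hSγ : S γ = γ := by
    rw [hγ, map_add, hSe0, map_smul, he1, idem1, map_sub, hS1, hSe0]
  -- commutation of β, γ with everything relevant
  have hβE : β * E = E * β := by
    rw [hβ, he1, idem1, he0, idem0]
    simp only [smul_mul_assoc, mul_smul_comm, add_mul, mul_add, sub_mul, mul_sub,
      one_mul, mul_one, hKpE]
  have hγF : γ * F = F * γ := by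
    rw [hγ, he1, idem1, he0, idem0]
    simp only [smul_mul_assoc, mul_smul_comm, add_mul, mul_add, sub_mul, mul_sub,
      one_mul, mul_one, hKpF]
  have hKpK : K ^ p * K = K * K ^ p := (Commute.refl K).pow_left p
  have hβK : β * K = K * β := by
    rw [hβ, he1, idem1, he0, idem0]
    simp only [smul_mul_assoc, mul_smul_comm, add_mul, mul_add, sub_mul, mul_sub,
      one_mul, mul_one, hKpK]
  -- the map φ
  set φ : A →ₗ[ℂ] A :=
    (LinearMap.mul' ℂ A) ∘ₗ (TensorProduct.map S LinearMap.id) ∘ₗ Δ.toLinearMap with hφ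
  have hφdef : ∀ a : A, φ a =
      (LinearMap.mul' ℂ A) ((TensorProduct.map S LinearMap.id) (Δ a)) := fun a => rfl
  -- the key auxiliary map on tensors
  have key : ∀ g : A, (∀ u v : A,
      (LinearMap.mul' ℂ A) ((TensorProduct.map S LinearMap.id) (Δ g * u ⊗ₜ[ℂ] v))
        = ε g • (S u * v)) →
      ∀ x : A ⊗[ℂ] A,
      (LinearMap.mul' ℂ A) ((TensorProduct.map S LinearMap.id) (Δ g * x))
        = ε g • (LinearMap.mul' ℂ A) ((TensorProduct.map S LinearMap.id) x) := by
    intro g hg x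
    induction x using TensorProduct.induction_on with
    | zero => simp
    | tmul u v => simpa using hg u v
    | add x y hx hy => rw [mul_add, map_add, map_add, hx, map_add, map_add, hy, smul_add]
  -- P(a): ∀ b, φ (a*b) = ε a • φ b
  suffices H : ∀ a : A, ∀ b : A, φ (a * b) = ε a • φ b by
    intro a
    have := H a 1
    rw [mul_one] at this
    rw [← hφdef, this, hφdef]
    simp [Δ.map_one, Algebra.TensorProduct.one_def, hS1]
  have stepE : ∀ u v : A,
      (LinearMap.mul' ℂ A) ((TensorProduct.map S LinearMap.id) (Δ E * u ⊗ₜ[ℂ] v))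
        = ε E • (S u * v) := by
    intro u v
    rw [hΔE, hεE, zero_smul, add_mul, Algebra.TensorProduct.tmul_mul_tmul,
      Algebra.TensorProduct.tmul_mul_tmul, map_add, TensorProduct.map_tmul,
      TensorProduct.map_tmul, map_add, hSmul, hSmul]
    simp only [LinearMap.id_coe, id_eq, LinearMap.mul'_apply, hSE, hSβ]
    have h2 : -(E * Kinv * β) * K = -(E * β) := by
      rw [neg_mul, mul_assoc, mul_assoc, hβK, ← mul_assoc Kinv, hKinv', one_mul]
    calc S u * -(E * Kinv * β) * (K * v) + S u * β * (E * v)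
        = S u * ((-(E * Kinv * β) * K) * v) + S u * ((β * E) * v) := by
          simp only [mul_assoc, mul_neg, neg_mul]
      _ = S u * ((-(E * β)) * v) + S u * ((E * β) * v) := by rw [h2, hβE]
      _ = 0 := by simp [neg_mul, mul_neg]
  have stepF : ∀ u v : A,
      (LinearMap.mul' ℂ A) ((TensorProduct.map S LinearMap.id) (Δ F * u ⊗ₜ[ℂ] v))
        = ε F • (S u * v) := by
    intro u v
    rw [hΔF, hεF, zero_smul, add_mul, Algebra.TensorProduct.tmul_mul_tmul,
      Algebra.TensorProduct.tmul_mul_tmul, map_add, TensorProduct.map_tmul,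
      TensorProduct.map_tmul, map_add, hSmul, hSmul]
    simp only [LinearMap.id_coe, id_eq, LinearMap.mul'_apply, hSF]
    have hSγK : S (γ * Kinv) = K * γ := by rw [hSmul, hSKinv, hSγ]
    rw [hSγK]
    calc S u * -(K * F * γ) * (1 * v) + S u * (K * γ) * (F * v)
        = S u * ((-(K * (F * γ))) * v) + S u * ((K * (γ * F)) * v) := by
          simp only [one_mul, mul_assoc, mul_neg, neg_mul]
      _ = 0 := by rw [hγF]; simp [neg_mul, mul_neg]
  have stepK : ∀ u v : A,
      (LinearMap.mul' ℂ A) ((TensorProduct.map S LinearMap.id) (Δ K * u ⊗ₜ[ℂ] v))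
        = ε K • (S u * v) := by
    intro u v
    rw [hΔK, hεK, one_smul, Algebra.TensorProduct.tmul_mul_tmul, TensorProduct.map_tmul,
      hSmul, hSK]
    simp only [LinearMap.id_coe, id_eq, LinearMap.mul'_apply]
    rw [mul_assoc, ← mul_assoc Kinv, hKinv', one_mul]
  have stepKinv : ∀ u v : A,
      (LinearMap.mul' ℂ A) ((TensorProduct.map S LinearMap.id) (Δ Kinv * u ⊗ₜ[ℂ] v))
        = ε Kinv • (S u * v) := by
    intro u v
    rw [hΔKinv, hεKinv, one_smul, Algebra.TensorProduct.tmul_mul_tmul, TensorProduct.map_tmul,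
      hSmul, hSKinv]
    simp only [LinearMap.id_coe, id_eq, LinearMap.mul'_apply]
    rw [mul_assoc, ← mul_assoc K, hKinv, one_mul]
  intro a
  have ha : a ∈ Algebra.adjoin ℂ ({E, F, K, Kinv} : Set A) := by rw [hgen]; trivial
  induction ha using Algebra.adjoin_induction with
  | algebraMap r =>
    intro b
    rw [← Algebra.smul_def, map_smul, AlgHom.commutes]
    simp
  | add x y hx hy hx' hy' =>
    intro b
    rw [add_mul, map_add, hx' b, hy' b, map_add, add_smul]
  | mul x y hx hy hx' hy' =>
    intro b
    rw [mul_assoc, hx' (y * b), hy' b, map_mul, smul_smul]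
  | mem g hg =>
    intro b
    rw [hφdef, hφdef, map_mul]
    rcases hg with rfl | rfl | rfl | rfl
    · exact key g stepE (Δ b)
    · exact key g stepF (Δ b)
    · exact key g stepK (Δ b)
    · exact key g stepKinv (Δ b)
end
end
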